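/- arXiv:0902.0068 — 7 statements merged into one kernel-verified Lean document; each statement's English description precedes it below -/
import Mathlib

section
/- Let G be a lcsc group acting properly (in the measurable sense) on a Borel space S. Then for every s ∈ S and every g in the stabilizer G_{s,s} = {g : g·s = s}, the modular function satisfies Δ(g) = 1. -/
open MeasureTheory ENNReal

/-!
For `g` in the stabilizer of `s`, right translation by `g⁻¹` fixes `g' ↦ k (g' • s)`, yet it
multiplies its integral by `Δ g`. Properness makes that integral finite and positivity of `k` makes
it nonzero, so `Δ g = 1`.
-/

theorem MeasureTheory.lintegral_ne_zero_of_forall_pos {α : Type*} [MeasurableSpace α]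
    {μ : Measure α} [NeZero μ] {f : α → ℝ≥0∞} (hf : Measurable f) (hpos : ∀ x, 0 < f x) :
    ∫⁻ x, f x ∂μ ≠ 0 := by
  rw [Ne, lintegral_eq_zero_iff hf, Filter.EventuallyEq, ae_iff]
  simpa [(hpos _).ne'] using NeZero.ne μ

theorem stmt_2_general {G S : Type*} [Group G] [TopologicalSpace G]
    [MeasurableSpace G]
    [MeasurableSpace S] [MulAction G S]
    (hact : Measurable fun p : G × S => p.1 • p.2)
    (lam : Measure G) [lam.IsHaarMeasure]
    (Δ : G → ℝ≥0∞)
    (hΔ : ∀ (h : G) (f : G → ℝ≥0∞), Measurable f →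
      ∫⁻ g', f (g' * h) ∂lam = Δ h⁻¹ * ∫⁻ g', f g' ∂lam)
    -- properness: a measurable `k : S → (0,∞)` with `μ_s k < ∞` for all `s`
    (k : S → ℝ≥0∞) (hk : Measurable k) (hkpos : ∀ t, 0 < k t ∧ k t < ⊤)
    (hkfin : ∀ s : S, ∫⁻ g', k (g' • s) ∂lam < ⊤) :
    ∀ (s : S) (g : G), g • s = s → Δ g = 1 := by
  intro s g hg
  have hg_inv : g⁻¹ • s = s := inv_smul_eq_iff.mpr hg.symm
  have hm : Measurable fun g' : G => k (g' • s) :=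
    hk.comp (hact.comp (measurable_id.prodMk measurable_const))
  have htrans := hΔ g⁻¹ _ hm
  simp only [mul_smul, hg_inv, inv_inv] at htrans
  have hI_ne_zero := lintegral_ne_zero_of_forall_pos (μ := lam) hm fun g' => (hkpos _).1
  exact (ENNReal.mul_left_inj hI_ne_zero (hkfin s).ne).mp (by rw [one_mul, ← htrans])

/-- If a lcsc group `G` acts properly (in the measurable sense) on a Borel space `S`,
then the modular function `Δ` equals `1` on every stabilizer `G_{s,s} = {g : g·s = s}`. -/
theorem stmt_2 {G S : Type*} [Group G] [TopologicalSpace G] [IsTopologicalGroup G]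
    [LocallyCompactSpace G] [SecondCountableTopology G] [T2Space G]
    [MeasurableSpace G] [BorelSpace G]
    [MeasurableSpace S] [StandardBorelSpace S] [MulAction G S]
    (hact : Measurable fun p : G × S => p.1 • p.2)
    (lam : Measure G) [lam.IsHaarMeasure]
    (Δ : G → ℝ≥0∞) (hΔpos : ∀ g, Δ g ≠ 0 ∧ Δ g ≠ ⊤)
    (hΔ : ∀ (h : G) (f : G → ℝ≥0∞), Measurable f →
      ∫⁻ g', f (g' * h) ∂lam = Δ h⁻¹ * ∫⁻ g', f g' ∂lam)
    -- properness: a measurable `k : S → (0,∞)` with `μ_s k < ∞` for all `s`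
    (k : S → ℝ≥0∞) (hk : Measurable k) (hkpos : ∀ t, 0 < k t ∧ k t < ⊤)
    (hkfin : ∀ s : S, ∫⁻ g', k (g' • s) ∂lam < ⊤) :
    ∀ (s : S) (g : G), g • s = s → Δ g = 1 :=
  stmt_2_general hact lam Δ hΔ k hk hkpos hkfin
end

section
/- Let G be a lcsc group acting measurably on a countable set S. The action is proper (i.e., the family μ_s = λ ∘ π_s⁻¹, s ∈ S, is uniformly σ-finite) if and only if 0 < λ(G_{s,s}) < ∞ for all s ∈ S, where G_{s,s} is the stabilizer of s. -/
/-!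
The orbit map `g ↦ g • s` splits `G` into the fibres `{g | g • s = t}`, each of which is empty or
a left translate of the stabilizer `G_{s,s}`. Hence `∫ k (g • s) dλ = ∑ₜ k t · λ(fibre t)`, with
every fibre of measure at most `λ(G_{s,s})`. Countably many fibres cover `G`, which has positive
Haar measure, so `λ(G_{s,s}) > 0`; the fibre `t = s` alone bounds `k s · λ(G_{s,s})` by `μ_s k`, so
properness forces `λ(G_{s,s}) < ∞`; conversely any strictly positive summable weight `k` on the
countable set `S` gives `μ_s k ≤ (∑ₜ k t) · λ(G_{s,s}) < ∞`.
-/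

open MeasureTheory ENNReal

section OrbitFibres

variable {G S : Type*} [Group G] [MeasurableSpace G] [MulAction G S]

lemma measure_smul_eq_le_measure_stabilizer [MeasurableMul G] (μ : Measure G)
    [μ.IsMulLeftInvariant] (s t : S) :
    μ {g : G | g • s = t} ≤ μ {g : G | g • s = s} := by
  rcases Set.eq_empty_or_nonempty {g : G | g • s = t} with hempty | ⟨g₀, hg₀⟩
  · simp [hempty]
  · have htranslate : {g : G | g • s = t} = (fun g => g₀⁻¹ * g) ⁻¹' {g : G | g • s = s} := by
      ext g
      simp only [Set.mem_preimage, Set.mem_ofPred_eq, mul_smul, inv_smul_eq_iff, hg₀.out]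
    rw [htranslate, measure_preimage_mul]

lemma measure_stabilizer_pos [Countable S] [MeasurableMul G] (μ : Measure G)
    [μ.IsMulLeftInvariant] [NeZero μ] (s : S) :
    0 < μ {g : G | g • s = s} := by
  refine pos_iff_ne_zero.2 fun hstab => NeZero.ne μ (Measure.measure_univ_eq_zero.1 ?_)
  have hcover : (Set.univ : Set G) = ⋃ t : S, {g : G | g • s = t} := by
    ext g
    simp
  rw [hcover, measure_iUnion_null_iff]
  exact fun t => le_antisymm (hstab ▸ measure_smul_eq_le_measure_stabilizer μ s t) bot_le

variable [Countable S] [MeasurableSpace S] [MeasurableSingletonClass S]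

lemma lintegral_comp_smul_eq_tsum (μ : Measure G) {s : S}
    (hs : Measurable fun g : G => g • s) (k : S → ℝ≥0∞) :
    ∫⁻ g, k (g • s) ∂μ = ∑' t : S, k t * μ {g : G | g • s = t} := by
  rw [← lintegral_map (measurable_of_countable k) hs, lintegral_countable']
  refine tsum_congr fun t => ?_
  rw [Measure.map_apply hs (measurableSet_singleton t)]
  rfl

lemma mul_measure_stabilizer_le_lintegral (μ : Measure G) {s : S}
    (hs : Measurable fun g : G => g • s) (k : S → ℝ≥0∞) :
    k s * μ {g : G | g • s = s} ≤ ∫⁻ g, k (g • s) ∂μ := by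
  rw [lintegral_comp_smul_eq_tsum μ hs]
  exact ENNReal.le_tsum (f := fun t => k t * μ {g : G | g • s = t}) s

lemma lintegral_comp_smul_le [MeasurableMul G] (μ : Measure G) [μ.IsMulLeftInvariant] {s : S}
    (hs : Measurable fun g : G => g • s) (k : S → ℝ≥0∞) :
    ∫⁻ g, k (g • s) ∂μ ≤ (∑' t : S, k t) * μ {g : G | g • s = s} := by
  rw [lintegral_comp_smul_eq_tsum μ hs, ← ENNReal.tsum_mul_right]
  exact ENNReal.tsum_le_tsum fun t =>
    mul_le_mul_right (measure_smul_eq_le_measure_stabilizer μ s t) _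

end OrbitFibres

theorem stmt_4_general {G S : Type*} [Group G] [TopologicalSpace G] [IsTopologicalGroup G]
    [MeasurableSpace G] [BorelSpace G]
    [Countable S] [MeasurableSpace S] [MeasurableSingletonClass S] [MulAction G S]
    (hact : Measurable fun p : G × S => p.1 • p.2)
    (lam : Measure G) [lam.IsHaarMeasure] :
    (∃ k : S → ℝ≥0∞, Measurable k ∧ (∀ t, 0 < k t ∧ k t < ⊤) ∧
        ∀ s : S, ∫⁻ g, k (g • s) ∂lam < ⊤)
      ↔ ∀ s : S, 0 < lam {g : G | g • s = s} ∧ lam {g : G | g • s = s} < ⊤ := by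
  have horbit (s : S) : Measurable fun g : G => g • s :=
    hact.comp (measurable_id.prodMk measurable_const)
  constructor
  · rintro ⟨k, -, hk, hproper⟩ s
    refine ⟨measure_stabilizer_pos lam s, ?_⟩
    have hbound := (mul_measure_stabilizer_le_lintegral lam (horbit s) k).trans_lt (hproper s)
    exact ENNReal.lt_top_of_mul_ne_top_right hbound.ne (hk s).1.ne'
  · intro hstab
    obtain ⟨w, hw_pos, hw_sum⟩ := ENNReal.exists_pos_sum_of_countable one_ne_zero S
    refine ⟨fun t => w t, measurable_of_countable _,
      fun t => ⟨ENNReal.coe_pos.2 (hw_pos t), ENNReal.coe_lt_top⟩, fun s => ?_⟩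
    exact (lintegral_comp_smul_le lam (horbit s) _).trans_lt
      (ENNReal.mul_lt_top (hw_sum.trans ENNReal.one_lt_top) (hstab s).2)

/-- A lcsc group `G` acting measurably on a countable set `S` acts properly (there is a
measurable `k : S → (0,∞)` with `μ_s k < ∞` for all `s`) if and only if
`0 < λ(G_{s,s}) < ∞` for all `s ∈ S`. -/
theorem stmt_4 {G S : Type*} [Group G] [TopologicalSpace G] [IsTopologicalGroup G]
    [LocallyCompactSpace G] [SecondCountableTopology G] [T2Space G]
    [MeasurableSpace G] [BorelSpace G]
    [Countable S] [MeasurableSpace S] [MeasurableSingletonClass S] [MulAction G S]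
    (hact : Measurable fun p : G × S => p.1 • p.2)
    (lam : Measure G) [lam.IsHaarMeasure] :
    (∃ k : S → ℝ≥0∞, Measurable k ∧ (∀ t, 0 < k t ∧ k t < ⊤) ∧
        ∀ s : S, ∫⁻ g, k (g • s) ∂lam < ⊤)
      ↔ ∀ s : S, 0 < lam {g : G | g • s = s} ∧ lam {g : G | g • s = s} < ⊤ :=
  stmt_4_general hact lam
end

section
/- Let G be a lcsc group acting properly on a Borel space S such that every stabilizer G_{s,s} is locally closed (the intersection of an open and a closed set) in G. Then every stabilizer G_{s,s} is compact. -/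
open MeasureTheory ENNReal
open scoped Pointwise

/-! Let `H` be the stabilizer of `s` and `f g = k (g • s)`. The subgroup `H` is closed, being
locally closed, and `f` is right `H`-invariant. Comparing `∫⁻ f` with its right translates shows
that right multiplication by elements of `H` preserves `λ`, hence also the finite measure
`ν = λ.withDensity f`. If `H` were not compact, one could fit arbitrarily many pairwise disjoint
right `H`-translates of a compact set of positive `ν`-measure into `G`, contradicting `ν G < ∞`. -/

section TopologicalGroup

variable {G : Type*} [Group G] [TopologicalSpace G] [IsTopologicalGroup G]

theorem Subgroup.isClosed_of_isLocallyClosed {H : Subgroup G} (hH : IsLocallyClosed (H : Set G)) :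
    IsClosed (H : Set G) := by
  obtain ⟨U, C, hU, hC, hUC⟩ := hH
  refine isClosed_of_closure_subset fun x hx => ?_
  have h1U : (1 : G) ∈ U := (hUC ▸ H.one_mem : (1 : G) ∈ U ∩ C).1
  obtain ⟨_, ⟨v, hvU, rfl⟩, hxv⟩ :=
    mem_closure_iff.mp hx _ (isOpenMap_mul_left x U hU) ⟨1, h1U, mul_one x⟩
  -- `v = x⁻¹ * (x * v)` lies in the closure of `H`, which is a subgroup contained in `C`
  have hv : v ∈ H := by
    have hvcl : v ∈ H.topologicalClosure := by
      simpa using mul_mem (inv_mem (show x ∈ H.topologicalClosure from hx))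
        (H.le_topologicalClosure hxv)
    rw [← SetLike.mem_coe, hUC]
    exact ⟨hvU, closure_minimal (hUC ▸ Set.inter_subset_right) hC hvcl⟩
  simpa using H.mul_mem hxv (H.inv_mem hv)

theorem Subgroup.exists_mem_disjoint_image_mul_right {H : Subgroup G}
    (hH : IsClosed (H : Set G)) (hHc : ¬IsCompact (H : Set G)) {K L : Set G}
    (hK : IsCompact K) (hL : IsCompact L) : ∃ h ∈ H, Disjoint L ((· * h) '' K) := by
  obtain ⟨h, hhH, hhKL⟩ : ∃ h ∈ H, h ∉ K⁻¹ * L := by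
    by_contra! hsub
    exact hHc ((hK.inv.mul hL).of_isClosed_subset hH hsub)
  refine ⟨h, hhH, Set.disjoint_left.2 ?_⟩
  rintro _ hkL ⟨k, hkK, rfl⟩
  exact hhKL ⟨k⁻¹, by simpa using hkK, k * h, hkL, by group⟩

variable [MeasurableSpace G] [BorelSpace G]

theorem Subgroup.measure_iUnion_image_mul_right_eq_top {H : Subgroup G}
    (hH : IsClosed (H : Set G)) (hHc : ¬IsCompact (H : Set G)) {ν : Measure G}
    (hν : ∀ h ∈ H, MeasurePreserving (· * h) ν ν) {K : Set G} (hK : IsCompact K)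
    (hKc : IsClosed K) (hK0 : ν K ≠ 0) : ν (⋃ h ∈ H, (· * h) '' K) = ∞ := by
  have hmeas : ∀ h ∈ H, ν ((· * h) '' K) = ν K := fun h hh => by
    rw [Set.image_mul_right]
    exact (hν h⁻¹ (H.inv_mem hh)).measure_preimage hKc.measurableSet.nullMeasurableSet
  have hbound : ∀ n : ℕ, ∃ L, IsCompact L ∧ L ⊆ ⋃ h ∈ H, (· * h) '' K ∧ n * ν K ≤ ν L := by
    intro n
    induction n with
    | zero => exact ⟨∅, isCompact_empty, Set.empty_subset _, by simp⟩
    | succ n ih =>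
      obtain ⟨L, hL, hLsub, hLn⟩ := ih
      obtain ⟨h, hhH, hdisj⟩ := H.exists_mem_disjoint_image_mul_right hH hHc hK hL
      refine ⟨L ∪ (· * h) '' K, hL.union (hK.image (continuous_mul_const h)),
        Set.union_subset hLsub (Set.subset_biUnion_of_mem (u := fun h => (· * h) '' K) hhH), ?_⟩
      calc ((n + 1 : ℕ) : ℝ≥0∞) * ν K = n * ν K + ν K := by push_cast; ring
        _ ≤ ν L + ν ((· * h) '' K) := by rw [hmeas h hhH]; gcongr
        _ = ν (L ∪ (· * h) '' K) :=
          (measure_union hdisj (isClosedMap_mul_right h K hKc).measurableSet).symm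
  by_contra hfin
  obtain ⟨n, hn⟩ := ENNReal.exists_nat_mul_gt hK0 hfin
  obtain ⟨L, -, hLsub, hLn⟩ := hbound n
  exact (hn.trans_le hLn).not_ge (measure_mono hLsub)

end TopologicalGroup

theorem MeasureTheory.MeasurePreserving.withDensity_of_comp_eq {α : Type*} [MeasurableSpace α]
    {μ : Measure α} {e : α → α} (he : MeasurePreserving e μ μ) {f : α → ℝ≥0∞} (hf : Measurable f)
    (hfe : ∀ a, f (e a) = f a) : MeasurePreserving e (μ.withDensity f) (μ.withDensity f) := by
  refine ⟨he.measurable, Measure.ext fun s hs => ?_⟩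
  rw [Measure.map_apply he.measurable hs, withDensity_apply _ (he.measurable hs),
    withDensity_apply _ hs, ← he.setLIntegral_comp_preimage hs hf]
  simp only [hfe]

theorem MeasureTheory.Measure.exists_isCompact_isClosed_measure_ne_zero {X : Type*}
    [TopologicalSpace X] [SigmaCompactSpace X] [R1Space X] [MeasurableSpace X]
    [OpensMeasurableSpace X] {ν : Measure X} (hν : ν ≠ 0) :
    ∃ K, IsCompact K ∧ IsClosed K ∧ ν K ≠ 0 := by
  by_contra! hnull
  refine hν (Measure.measure_univ_eq_zero.mp ?_)
  rw [← iUnion_closure_compactCovering]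
  exact measure_iUnion_null fun n =>
    hnull _ (isCompact_compactCovering X n).closure isClosed_closure

theorem MeasureTheory.Measure.map_mul_right_eq_self_of_lintegral {G : Type*} [Group G]
    [TopologicalSpace G] [IsTopologicalGroup G] [LocallyCompactSpace G]
    [SecondCountableTopology G] [MeasurableSpace G] [BorelSpace G] (μ : Measure G)
    [μ.IsHaarMeasure] {f : G → ℝ≥0∞} (hf : Measurable f) (hf0 : ∫⁻ g, f g ∂μ ≠ 0)
    (hfi : ∫⁻ g, f g ∂μ ≠ ∞) {h : G} (hfh : ∀ g, f (g * h) = f g) :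
    map (· * h) μ = μ := by
  set c := haarScalarFactor (map (· * h) μ) μ
  have hmap : map (· * h) μ = c • μ := isMulLeftInvariant_eq_smul _ _
  have hc : (c : ℝ≥0∞) * ∫⁻ g, f g ∂μ = 1 * ∫⁻ g, f g ∂μ :=
    calc (c : ℝ≥0∞) * ∫⁻ g, f g ∂μ = ∫⁻ g, f g ∂(c • μ) := (lintegral_smul_measure c f).symm
      _ = ∫⁻ g, f (g * h) ∂μ := by rw [← hmap, lintegral_map hf (measurable_mul_const h)]
      _ = 1 * ∫⁻ g, f g ∂μ := by simp only [hfh, one_mul]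
  have hc1 : c = 1 := by exact_mod_cast (ENNReal.mul_left_inj hf0 hfi).1 hc
  rw [hmap, hc1, one_smul]

theorem stmt_8_general {G S : Type*} [Group G] [TopologicalSpace G] [IsTopologicalGroup G]
    [LocallyCompactSpace G] [SecondCountableTopology G]
    [MeasurableSpace G] [BorelSpace G]
    [MeasurableSpace S] [MulAction G S]
    (hact : Measurable fun p : G × S => p.1 • p.2)
    (lam : Measure G) [lam.IsHaarMeasure]
    -- properness
    (k : S → ℝ≥0∞) (hk : Measurable k) (hkpos : ∀ t, 0 < k t ∧ k t < ⊤)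
    (hkfin : ∀ s : S, ∫⁻ g, k (g • s) ∂lam < ⊤)
    (hlc : ∀ s : S, ∃ (U C : Set G), IsOpen U ∧ IsClosed C ∧
      {g : G | g • s = s} = U ∩ C) :
    ∀ s : S, IsCompact {g : G | g • s = s} := by
  intro s
  set H := MulAction.stabilizer G s
  have hH : IsClosed (H : Set G) := H.isClosed_of_isLocallyClosed (hlc s)
  by_contra hHc
  set f : G → ℝ≥0∞ := fun g => k (g • s)
  have hf : Measurable f := hk.comp (hact.comp (measurable_id.prodMk measurable_const))
  have hfH : ∀ h ∈ H, ∀ g, f (g * h) = f g := fun h hh g => by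
    simp only [f, mul_smul, MulAction.mem_stabilizer_iff.mp hh]
  have hf0 : ∫⁻ g, f g ∂lam ≠ 0 := fun h0 => by
    obtain ⟨g, hg⟩ := ((lintegral_eq_zero_iff hf).mp h0).exists
    exact (hkpos (g • s)).1.ne' hg
  set ν := lam.withDensity f
  have hν : ∀ h ∈ H, MeasurePreserving (· * h) ν ν := fun h hh =>
    have hlam : MeasurePreserving (· * h) lam lam :=
      ⟨measurable_mul_const h,
        lam.map_mul_right_eq_self_of_lintegral hf hf0 (hkfin s).ne (hfH h hh)⟩
    hlam.withDensity_of_comp_eq hf (hfH h hh)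
  have hν_univ : ν Set.univ = ∫⁻ g, f g ∂lam := by rw [withDensity_apply _ .univ, setLIntegral_univ]
  have hν0 : ν ≠ 0 := by rwa [Ne, ← Measure.measure_univ_eq_zero, hν_univ]
  obtain ⟨K, hK, hKc, hK0⟩ := Measure.exists_isCompact_isClosed_measure_ne_zero hν0
  have htop := H.measure_iUnion_image_mul_right_eq_top hH hHc hν hK hKc hK0
  exact ((measure_mono (Set.subset_univ _)).trans_lt (hν_univ ▸ hkfin s)).ne htop

/-- If a lcsc group `G` acts properly on a Borel space `S` and every stabilizer
`G_{s,s}` is locally closed (intersection of an open and a closed set) in `G`,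
then every stabilizer is compact. -/
theorem stmt_8 {G S : Type*} [Group G] [TopologicalSpace G] [IsTopologicalGroup G]
    [LocallyCompactSpace G] [SecondCountableTopology G] [T2Space G]
    [MeasurableSpace G] [BorelSpace G]
    [MeasurableSpace S] [StandardBorelSpace S] [MulAction G S]
    (hact : Measurable fun p : G × S => p.1 • p.2)
    (lam : Measure G) [lam.IsHaarMeasure]
    -- properness
    (k : S → ℝ≥0∞) (hk : Measurable k) (hkpos : ∀ t, 0 < k t ∧ k t < ⊤)
    (hkfin : ∀ s : S, ∫⁻ g, k (g • s) ∂lam < ⊤)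
    (hlc : ∀ s : S, ∃ (U C : Set G), IsOpen U ∧ IsClosed C ∧
      {g : G | g • s = s} = U ∩ C) :
    ∀ s : S, IsCompact {g : G | g • s = s} :=
  stmt_8_general hact lam k hk hkpos hkfin hlc
end

section
/- Let G be a lcsc group, λ a left Haar measure, Δ the modular function, and suppose G acts on a Borel space S with fixed points b, b' ∈ S. Let Δ*(s) := Δ(g⁻¹) for any g with g·b' = s (well-defined on the orbit of b'). Then for any measurable invariant function m : S × S → [0,∞] (m(g·s, g·t) = m(s,t)), ∫ m(b, s) Δ*(s) dμ_{b'}(s) = ∫ m(s, b') dμ_b(s), where μ_x = λ ∘ π_x⁻¹. -/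
/-!
Invariance of `m` gives `m(b, g • b') = m(g⁻¹ • b, b')`, so after pulling both integrals back
to `G` the claim is the inversion formula `∫ f(g⁻¹) Δ(g⁻¹) dλ = ∫ f dλ`. Testing the hypothesis
on `Δ` against an indicator shows `Δ(g⁻¹) = δ(g)`, where `δ` is Mathlib's modular character,
normalised by `map (· * g) λ = δ g • λ`. The measure `δ • λ` is right invariant, so its image
`ν` under inversion is left invariant, hence `ν = c • λ`; as the construction `λ ↦ ν` is an
involution commuting with scalars, `c² = 1`.
-/

open MeasureTheory ENNReal

namespace MeasureTheory.Measure

lemma exists_measurableSet_measure_ne_zero_ne_top {X : Type*} [TopologicalSpace X]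
    [MeasurableSpace X] [OpensMeasurableSpace X] [Nonempty X] (μ : Measure X)
    [IsLocallyFiniteMeasure μ] [μ.IsOpenPosMeasure] :
    ∃ U : Set X, MeasurableSet U ∧ μ U ≠ 0 ∧ μ U ≠ ∞ := by
  obtain ⟨U, hxU, hU, hUtop⟩ := μ.exists_isOpen_measure_lt_top (Classical.arbitrary X)
  exact ⟨U, hU.measurableSet, hU.measure_ne_zero μ ⟨_, hxU⟩, hUtop.ne⟩

lemma smul_left_injective_of_isOpenPosMeasure {X : Type*} [TopologicalSpace X]
    [MeasurableSpace X] [OpensMeasurableSpace X] [Nonempty X] (μ : Measure X)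
    [IsLocallyFiniteMeasure μ] [μ.IsOpenPosMeasure] :
    Function.Injective fun c : ℝ≥0∞ => c • μ := by
  intro c d h
  obtain ⟨U, -, hU0, hUtop⟩ := exists_measurableSet_measure_ne_zero_ne_top μ
  have := congrArg (· U) h
  simp only [smul_apply, smul_eq_mul] at this
  exact (ENNReal.mul_left_inj hU0 hUtop).1 this

lemma lintegral_inv_measure {G : Type*} [MeasurableSpace G] [InvolutiveInv G] [MeasurableInv G]
    (ρ : Measure G) (f : G → ℝ≥0∞) : ∫⁻ x, f x ∂ρ.inv = ∫⁻ x, f x⁻¹ ∂ρ :=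
  lintegral_map_equiv f (MeasurableEquiv.inv G)

variable {G : Type*} [Group G] [TopologicalSpace G] [IsTopologicalGroup G] [LocallyCompactSpace G]

lemma modularCharacter_mul_modularCharacter_inv (g : G) :
    (modularCharacter g : ℝ≥0∞) * modularCharacter g⁻¹ = 1 := by
  rw [← ENNReal.coe_mul, ← map_mul, mul_inv_cancel, map_one, ENNReal.coe_one]

variable [SecondCountableTopology G] [MeasurableSpace G] [BorelSpace G]

lemma map_mul_right_eq_modularCharacter_smul (μ : Measure G) [IsHaarMeasure μ] (g : G) :
    map (· * g) μ = modularCharacter g • μ := by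
  rw [modularCharacter, MonoidHom.coe_mk, OneHom.coe_mk,
    modularCharacterFun_eq_haarScalarFactor μ]
  exact isMulLeftInvariant_eq_smul _ μ

lemma lintegral_mul_right_eq_modularCharacter_mul (μ : Measure G) [IsHaarMeasure μ]
    {f : G → ℝ≥0∞} (hf : Measurable f) (g : G) :
    ∫⁻ x, f (x * g) ∂μ = modularCharacter g * ∫⁻ x, f x ∂μ := by
  rw [← lintegral_map hf (measurable_mul_const g), map_mul_right_eq_modularCharacter_smul,
    lintegral_smul_measure, ENNReal.smul_def, smul_eq_mul]

lemma eq_modularCharacter_of_lintegral_mul_right (μ : Measure G) [IsHaarMeasure μ]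
    {D : G → ℝ≥0∞}
    (hD : ∀ (g : G) (f : G → ℝ≥0∞), Measurable f → ∫⁻ x, f (x * g) ∂μ = D g * ∫⁻ x, f x ∂μ)
    (g : G) : D g = modularCharacter g := by
  obtain ⟨U, hU, hU0, hUtop⟩ := exists_measurableSet_measure_ne_zero_ne_top μ
  have hf : Measurable (U.indicator 1 : G → ℝ≥0∞) := measurable_one.indicator hU
  have := (hD g _ hf).symm.trans (lintegral_mul_right_eq_modularCharacter_mul μ hf g)
  rw [lintegral_indicator_one hU] at this
  exact (ENNReal.mul_left_inj hU0 hUtop).1 this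

lemma measurable_modularCharacter :
    Measurable fun g : G => (modularCharacter g : ℝ≥0∞) := by
  obtain ⟨U, hU, hU0, hUtop⟩ := exists_measurableSet_measure_ne_zero_ne_top (haar : Measure G)
  have h (g : G) : (modularCharacter g : ℝ≥0∞) = haar ((· * g) ⁻¹' U) / haar U := by
    rw [← map_apply (measurable_mul_const g) hU, map_mul_right_eq_modularCharacter_smul,
      smul_apply, ENNReal.smul_def, smul_eq_mul, ENNReal.mul_div_cancel_right hU0 hUtop]
  simp_rw [h]
  exact (measurable_measure_mul_right _ hU).div_const _

instance isMulRightInvariant_withDensity_modularCharacter (μ : Measure G) [IsHaarMeasure μ] :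
    IsMulRightInvariant (μ.withDensity fun g => modularCharacter g) := by
  refine ⟨fun g => ext_of_lintegral _ fun f hf => ?_⟩
  have hfδ : Measurable fun x => f x * modularCharacter (x * g⁻¹) :=
    hf.mul (measurable_modularCharacter.comp (measurable_mul_const _))
  calc ∫⁻ x, f x ∂map (· * g) (μ.withDensity fun g => modularCharacter g)
      = ∫⁻ x, f (x * g) * modularCharacter (x * g * g⁻¹) ∂μ := by
        have hfg : Measurable fun x => f (x * g) := hf.comp (measurable_mul_const g)
        rw [lintegral_map hf (measurable_mul_const g),
          lintegral_withDensity_eq_lintegral_mul _ measurable_modularCharacter hfg]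
        simp only [Pi.mul_apply, mul_inv_cancel_right, mul_comm]
    _ = modularCharacter g * ((∫⁻ x, f x * modularCharacter x ∂μ) * modularCharacter g⁻¹) := by
        rw [lintegral_mul_right_eq_modularCharacter_mul μ hfδ,
          ← lintegral_mul_const _ (show Measurable fun x => f x * (modularCharacter x : ℝ≥0∞) from
            hf.mul measurable_modularCharacter)]
        simp only [map_mul, ENNReal.coe_mul, mul_assoc]
    _ = ∫⁻ x, f x ∂μ.withDensity fun g => modularCharacter g := by
        rw [mul_left_comm, modularCharacter_mul_modularCharacter_inv, mul_one,
          lintegral_withDensity_eq_lintegral_mul _ measurable_modularCharacter hf]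
        simp only [Pi.mul_apply, mul_comm]

lemma inv_withDensity_modularCharacter_involutive (ρ : Measure G) :
    (((ρ.withDensity fun g => modularCharacter g).inv.withDensity
      fun g => modularCharacter g).inv) = ρ := by
  refine ext_of_lintegral _ fun f hf => ?_
  have hfi : Measurable fun x => f x⁻¹ := hf.comp measurable_inv
  have hδf : Measurable fun x => (modularCharacter x⁻¹ : ℝ≥0∞) * f x :=
    (measurable_modularCharacter.comp measurable_inv).mul hf
  rw [lintegral_inv_measure,
    lintegral_withDensity_eq_lintegral_mul _ measurable_modularCharacter hfi, lintegral_inv_measure]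
  simp only [Pi.mul_apply, inv_inv]
  rw [lintegral_withDensity_eq_lintegral_mul _ measurable_modularCharacter hδf]
  simp only [Pi.mul_apply, ← mul_assoc, modularCharacter_mul_modularCharacter_inv, one_mul]

theorem inv_withDensity_modularCharacter (μ : Measure G) [IsHaarMeasure μ] :
    (μ.withDensity fun g => modularCharacter g).inv = μ := by
  set ν := (μ.withDensity fun g => modularCharacter g).inv
  obtain ⟨U, -, hU0, hUtop⟩ := exists_measurableSet_measure_ne_zero_ne_top μ
  set c := ν U / μ U
  have hν : ν = c • μ := measure_eq_div_smul ν μ hU0 hUtop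
  have hc : c * c = 1 := by
    refine smul_left_injective_of_isOpenPosMeasure μ ?_
    calc (c * c) • μ = c • ν := by rw [hν, smul_smul]
      _ = ((c • μ).withDensity fun g => modularCharacter g).inv := by
          rw [withDensity_smul_measure, inv_def, Measure.map_smul]; rfl
      _ = (1 : ℝ≥0∞) • μ := by
          rw [← hν, one_smul, inv_withDensity_modularCharacter_involutive]
  have hc1 : c = 1 := (ENNReal.pow_right_strictMono two_ne_zero).injective (by simpa [sq] using hc)
  rw [hν, hc1, one_smul]

theorem lintegral_inv_mul_modularCharacter (μ : Measure G) [IsHaarMeasure μ]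
    {f : G → ℝ≥0∞} (hf : Measurable f) :
    ∫⁻ g, f g⁻¹ * modularCharacter g ∂μ = ∫⁻ g, f g ∂μ := by
  have hfi : Measurable fun g => f g⁻¹ := hf.comp measurable_inv
  conv_rhs => rw [← inv_withDensity_modularCharacter μ]
  rw [lintegral_inv_measure,
    lintegral_withDensity_eq_lintegral_mul _ measurable_modularCharacter hfi]
  simp only [Pi.mul_apply, mul_comm]

end MeasureTheory.Measure

theorem stmt_12_general {G S : Type*} [Group G] [TopologicalSpace G] [IsTopologicalGroup G]
    [LocallyCompactSpace G] [SecondCountableTopology G]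
    [MeasurableSpace G] [BorelSpace G]
    [MeasurableSpace S] [MulAction G S]
    (hact : Measurable fun p : G × S => p.1 • p.2)
    (lam : Measure G) [lam.IsHaarMeasure]
    (Δ : G → ℝ≥0∞)
    (hΔ : ∀ (h : G) (f : G → ℝ≥0∞), Measurable f →
      ∫⁻ g, f (g * h) ∂lam = Δ h⁻¹ * ∫⁻ g, f g ∂lam)
    (b b' : S)
    (Δstar : S → ℝ≥0∞) (hΔstar_meas : Measurable Δstar)
    (hΔstar : ∀ g : G, Δstar (g • b') = Δ g⁻¹)
    (m : S → S → ℝ≥0∞) (hm : Measurable fun p : S × S => m p.1 p.2)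
    (hminv : ∀ (g : G) (s t : S), m (g • s) (g • t) = m s t) :
    ∫⁻ s, m b s * Δstar s ∂(Measure.map (fun g : G => g • b') lam)
      = ∫⁻ s, m s b' ∂(Measure.map (fun g : G => g • b) lam) := by
  have horbit (x : S) : Measurable fun g : G => g • x :=
    hact.comp (measurable_id.prodMk measurable_const)
  have hΔ_eq (g : G) : Δ g⁻¹ = Measure.modularCharacter g :=
    Measure.eq_modularCharacter_of_lintegral_mul_right lam hΔ g
  have hpull (g : G) :
      m b (g • b') * Δstar (g • b') = m (g⁻¹ • b) b' * Measure.modularCharacter g := by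
    rw [hΔstar, hΔ_eq, ← hminv g⁻¹, inv_smul_smul]
  have hlhs : Measurable fun s => m b s * Δstar s :=
    (hm.comp (measurable_const.prodMk measurable_id)).mul hΔstar_meas
  have hrhs : Measurable fun s => m s b' := hm.comp (measurable_id.prodMk measurable_const)
  have hf : Measurable fun g : G => m (g • b) b' := hrhs.comp (horbit b)
  rw [lintegral_map hlhs (horbit b'), lintegral_map hrhs (horbit b), lintegral_congr hpull]
  exact Measure.lintegral_inv_mul_modularCharacter lam hf

/-- Balance equation between two orbits: for points `b, b' ∈ S`, with
`Δ*(s) := Δ(g⁻¹)` for any `g` with `g·b' = s`, and any measurable jointly invariant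
`m : S × S → [0,∞]`, one has `∫ m(b,s) Δ*(s) dμ_{b'}(s) = ∫ m(s,b') dμ_b(s)`. -/
theorem stmt_12 {G S : Type*} [Group G] [TopologicalSpace G] [IsTopologicalGroup G]
    [LocallyCompactSpace G] [SecondCountableTopology G] [T2Space G]
    [MeasurableSpace G] [BorelSpace G]
    [MeasurableSpace S] [StandardBorelSpace S] [MulAction G S]
    (hact : Measurable fun p : G × S => p.1 • p.2)
    (lam : Measure G) [lam.IsHaarMeasure]
    (Δ : G → ℝ≥0∞) (hΔpos : ∀ g, Δ g ≠ 0 ∧ Δ g ≠ ⊤)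
    (hΔ : ∀ (h : G) (f : G → ℝ≥0∞), Measurable f →
      ∫⁻ g, f (g * h) ∂lam = Δ h⁻¹ * ∫⁻ g, f g ∂lam)
    (b b' : S)
    (Δstar : S → ℝ≥0∞) (hΔstar_meas : Measurable Δstar)
    (hΔstar : ∀ g : G, Δstar (g • b') = Δ g⁻¹)
    (m : S → S → ℝ≥0∞) (hm : Measurable fun p : S × S => m p.1 p.2)
    (hminv : ∀ (g : G) (s t : S), m (g • s) (g • t) = m s t) :
    ∫⁻ s, m b s * Δstar s ∂(Measure.map (fun g : G => g • b') lam)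
      = ∫⁻ s, m s b' ∂(Measure.map (fun g : G => g • b) lam) :=
  stmt_12_general hact lam Δ hΔ b b' Δstar hΔstar_meas hΔstar m hm hminv
end

section
/- Let G be a unimodular lcsc group acting transitively on itself (S = G) and let M be a σ-finite measure on G × G invariant under the diagonal action (s,t) ↦ (gs, gt). Then for every measurable B ⊆ G, M(B × G) = M(G × B). -/
open MeasureTheory ENNReal Set

/-! Choose a symmetric weight `w ≥ 0` on `G` all of whose left translates have `λ`-integral `1`
(a normalised indicator of a symmetric neighbourhood of `1`). Inserting `1 = ∫ w(t⁻¹h) dλ(h)` into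
`∫ u(s) dM(s,t)`, exchanging the integrals, translating `M` by `h` and using right invariance of
`λ` gives `∫ u(s) dM(s,t) = (∫ u dλ) · ∫ w(t⁻¹) dM(s,t)`. For the swapped measure this reads
`∫ u(t) dM = (∫ u dλ) · ∫ w(s⁻¹) dM`, and the two constants agree: take `u = w ∘ inv` in the
first identity. With `u = 1_B` both sides of the theorem become `λ(B)` times the same constant. -/

theorem exists_symmetric_weight_lintegral_mul_left_eq_one {G : Type*} [Group G] [MeasurableSpace G]
    [MeasurableMul G] (lam : Measure G) [lam.IsMulLeftInvariant] {K : Set G}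
    (hK : MeasurableSet K) (hK_inv : K⁻¹ = K) (hK_pos : lam K ≠ 0) (hK_fin : lam K ≠ ∞) :
    ∃ w : G → ℝ≥0∞, Measurable w ∧ (∀ x, w x⁻¹ = w x) ∧ ∀ a, ∫⁻ h, w (a * h) ∂lam = 1 := by
  refine ⟨fun x => (lam K)⁻¹ * K.indicator 1 x, by fun_prop (disch := exact hK), ?_, ?_⟩
  · intro x
    have hx : x⁻¹ ∈ K ↔ x ∈ K := by rw [← mem_inv, hK_inv]
    by_cases hxK : x ∈ K <;> simp [hxK, hx]
  · intro a
    rw [lintegral_const_mul' _ _ (ENNReal.inv_ne_top.2 hK_pos),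
      lintegral_mul_left_eq_self (K.indicator 1) a, lintegral_indicator_one hK,
      ENNReal.inv_mul_cancel hK_pos hK_fin]

theorem exists_symmetric_measurableSet_measure_ne_zero_ne_top {G : Type*} [Group G]
    [TopologicalSpace G] [IsTopologicalGroup G] [LocallyCompactSpace G] [MeasurableSpace G]
    [BorelSpace G] (lam : Measure G) [lam.IsHaarMeasure] :
    ∃ K : Set G, MeasurableSet K ∧ K⁻¹ = K ∧ lam K ≠ 0 ∧ lam K ≠ ∞ := by
  obtain ⟨C, hC, hC_nhds⟩ := exists_compact_mem_nhds (1 : G)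
  obtain ⟨K, hK_nhds, hK_closed, hK_inv, hKK⟩ := exists_closed_nhds_one_inv_eq_mul_subset hC_nhds
  refine ⟨K, hK_closed.measurableSet, hK_inv, (lam.measure_pos_of_mem_nhds hK_nhds).ne', ?_⟩
  exact ne_top_of_le_ne_top hC.measure_lt_top.ne
    (measure_mono ((subset_mul_left K (mem_of_mem_nhds hK_nhds)).trans hKK))

section MassTransport

variable {G : Type*} [Group G] [MeasurableSpace G] [MeasurableMul₂ G] [MeasurableInv G]
  (lam : Measure G) [SFinite lam] [lam.IsMulRightInvariant]
  {M : Measure (G × G)} [SFinite M] {w : G → ℝ≥0∞}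

theorem lintegral_comp_fst_eq_mul
    (hM : ∀ g : G, Measure.map (fun p : G × G => (g * p.1, g * p.2)) M = M)
    (hw : Measurable w) (hw_one : ∀ a : G, ∫⁻ h, w (a * h) ∂lam = 1)
    {u : G → ℝ≥0∞} (hu : Measurable u) :
    ∫⁻ p, u p.1 ∂M = (∫⁻ x, u x ∂lam) * ∫⁻ p, w p.2⁻¹ ∂M :=
  calc ∫⁻ p, u p.1 ∂M
      = ∫⁻ p, ∫⁻ h, u p.1 * w (p.2⁻¹ * h) ∂lam ∂M := by
        refine lintegral_congr fun p => ?_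
        rw [lintegral_const_mul _ (by fun_prop), hw_one, mul_one]
    _ = ∫⁻ h, ∫⁻ p, u p.1 * w (p.2⁻¹ * h) ∂M ∂lam :=
        lintegral_lintegral_swap (by fun_prop)
    _ = ∫⁻ h, ∫⁻ p, u (h * p.1) * w p.2⁻¹ ∂M ∂lam := by
        refine lintegral_congr fun h => ?_
        conv_lhs => rw [← hM h]
        rw [lintegral_map (by fun_prop) (by fun_prop)]
        simp [mul_assoc]
    _ = ∫⁻ p, ∫⁻ h, u (h * p.1) * w p.2⁻¹ ∂lam ∂M :=
        lintegral_lintegral_swap (by fun_prop)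
    _ = ∫⁻ p, (∫⁻ x, u x ∂lam) * w p.2⁻¹ ∂M := by
        refine lintegral_congr fun p => ?_
        rw [lintegral_mul_const _ (by fun_prop), lintegral_mul_right_eq_self u p.1]
    _ = (∫⁻ x, u x ∂lam) * ∫⁻ p, w p.2⁻¹ ∂M :=
        lintegral_const_mul _ (by fun_prop)

theorem measure_prod_univ_eq_mul
    (hM : ∀ g : G, Measure.map (fun p : G × G => (g * p.1, g * p.2)) M = M)
    (hw : Measurable w) (hw_one : ∀ a : G, ∫⁻ h, w (a * h) ∂lam = 1)
    {B : Set G} (hB : MeasurableSet B) :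
    M (B ×ˢ univ) = lam B * ∫⁻ p, w p.2⁻¹ ∂M := by
  rw [← lintegral_indicator_one hB,
    ← lintegral_comp_fst_eq_mul lam hM hw hw_one (measurable_one.indicator hB),
    ← lintegral_indicator_one (hB.prod .univ)]
  refine lintegral_congr fun p => ?_
  by_cases hp : p.1 ∈ B <;> simp [hp]

theorem lintegral_inv_fst_eq_lintegral_inv_snd
    (hM : ∀ g : G, Measure.map (fun p : G × G => (g * p.1, g * p.2)) M = M)
    (hw : Measurable w) (hw_one : ∀ a : G, ∫⁻ h, w (a * h) ∂lam = 1)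
    (hw_inv : ∀ x, w x⁻¹ = w x) :
    ∫⁻ p, w p.1⁻¹ ∂M = ∫⁻ p, w p.2⁻¹ ∂M := by
  have h_inv_one : ∫⁻ x, w x⁻¹ ∂lam = 1 := by simpa [hw_inv] using hw_one 1
  rw [lintegral_comp_fst_eq_mul (u := fun x => w x⁻¹) lam hM hw hw_one (by fun_prop), h_inv_one,
    one_mul]

end MassTransport

theorem map_swap_of_forall_map_mul_eq {G : Type*} [Mul G] [MeasurableSpace G] [MeasurableMul G]
    {M : Measure (G × G)} (hM : ∀ g : G, Measure.map (fun p : G × G => (g * p.1, g * p.2)) M = M)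
    (g : G) :
    Measure.map (fun p : G × G => (g * p.1, g * p.2)) (M.map Prod.swap) = M.map Prod.swap := by
  rw [Measure.map_map (by fun_prop) measurable_swap]
  conv_rhs => rw [← hM g, Measure.map_map measurable_swap (by fun_prop)]
  rfl

theorem stmt_13_general {G : Type*} [Group G] [TopologicalSpace G] [IsTopologicalGroup G]
    [LocallyCompactSpace G] [SecondCountableTopology G]
    [MeasurableSpace G] [BorelSpace G]
    (lam : Measure G) [lam.IsHaarMeasure] [lam.IsMulRightInvariant]
    (M : Measure (G × G)) [SigmaFinite M]
    (hM : ∀ g : G, Measure.map (fun p : G × G => (g * p.1, g * p.2)) M = M)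
    (B : Set G) (hB : MeasurableSet B) :
    M (B ×ˢ Set.univ) = M (Set.univ ×ˢ B) := by
  obtain ⟨K, hK, hK_inv, hK_pos, hK_fin⟩ :=
    exists_symmetric_measurableSet_measure_ne_zero_ne_top lam
  obtain ⟨w, hw, hw_inv, hw_one⟩ :=
    exists_symmetric_weight_lintegral_mul_left_eq_one lam hK hK_inv hK_pos hK_fin
  have hM_swap := map_swap_of_forall_map_mul_eq hM
  calc M (B ×ˢ univ)
      = lam B * ∫⁻ p, w p.2⁻¹ ∂M := measure_prod_univ_eq_mul lam hM hw hw_one hB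
    _ = lam B * ∫⁻ p, w p.2⁻¹ ∂(M.map Prod.swap) := by
        rw [lintegral_map (by fun_prop) measurable_swap,
          ← lintegral_inv_fst_eq_lintegral_inv_snd lam hM hw hw_one hw_inv]
        rfl
    _ = (M.map Prod.swap) (B ×ˢ univ) :=
        (measure_prod_univ_eq_mul lam hM_swap hw hw_one hB).symm
    _ = M (univ ×ˢ B) := by
        rw [Measure.map_apply measurable_swap (hB.prod .univ), preimage_swap_prod]

/-- Mass-transport principle, transitive unimodular case: for a unimodular lcsc group `G`
acting on itself and a σ-finite measure `M` on `G × G` invariant under the diagonal action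
`(s,t) ↦ (gs,gt)`, one has `M(B × G) = M(G × B)` for every measurable `B ⊆ G`. -/
theorem stmt_13 {G : Type*} [Group G] [TopologicalSpace G] [IsTopologicalGroup G]
    [LocallyCompactSpace G] [SecondCountableTopology G] [T2Space G]
    [MeasurableSpace G] [BorelSpace G]
    (lam : Measure G) [lam.IsHaarMeasure] [lam.IsMulRightInvariant]
    (M : Measure (G × G)) [SigmaFinite M]
    (hM : ∀ g : G, Measure.map (fun p : G × G => (g * p.1, g * p.2)) M = M)
    (B : Set G) (hB : MeasurableSet B) :
    M (B ×ˢ Set.univ) = M (Set.univ ×ˢ B) :=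
  stmt_13_general lam M hM B hB
end

section
/- Let G be a lcsc group acting on itself by multiplication and M a σ-finite jointly invariant measure on G × G. Then for every measurable B ⊆ G, ∫ Δ(s t⁻¹) 1_B(s) dM(s,t) = ∫ 1_B(t) dM(s,t), where Δ is the modular function. -/
open MeasureTheory ENNReal

/-- Averaging/mass-transport auxiliary identity: for a jointly invariant σ-finite measure `M`
and equivariant data `φ, ψ`, one has
`(∫ φ p * 1_B(ψ p) dM) * λ(K) = (∫ 1_K(p.1⁻¹) * φ p * Δ((ψ p)⁻¹) dM) * λ(B)`. -/
lemma mtp_aux {G : Type*} [Group G] [TopologicalSpace G] [IsTopologicalGroup G]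
    [LocallyCompactSpace G] [SecondCountableTopology G] [T2Space G]
    [MeasurableSpace G] [BorelSpace G]
    (lam : Measure G) [lam.IsHaarMeasure]
    (Δ : G → ℝ≥0∞) (hΔm : Measurable Δ)
    (hΔ : ∀ (h : G) (f : G → ℝ≥0∞), Measurable f →
      ∫⁻ g, f (g * h) ∂lam = Δ h⁻¹ * ∫⁻ g, f g ∂lam)
    (M : Measure (G × G)) [SigmaFinite M]
    (hM : ∀ g : G, Measure.map (fun p : G × G => (g * p.1, g * p.2)) M = M)
    (B : Set G) (hB : MeasurableSet B)
    (K : Set G) (hK : MeasurableSet K)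
    (φ : G × G → ℝ≥0∞) (hφm : Measurable φ)
    (ψ : G × G → G) (hψm : Measurable ψ)
    (hφinv : ∀ (g : G) (p : G × G), φ (g * p.1, g * p.2) = φ p)
    (hψinv : ∀ (g : G) (p : G × G), ψ (g * p.1, g * p.2) = g * ψ p) :
    (∫⁻ p, φ p * B.indicator 1 (ψ p) ∂M) * lam K
      = (∫⁻ p, K.indicator 1 (p.1⁻¹) * φ p * Δ (ψ p)⁻¹ ∂M) * lam B := by
  have hKm1 : Measurable (K.indicator (1 : G → ℝ≥0∞)) := measurable_one.indicator hK
  have hBm1 : Measurable (B.indicator (1 : G → ℝ≥0∞)) := measurable_one.indicator hB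
  have hmul : Measurable fun p : G × G => φ p * B.indicator 1 (ψ p) :=
    hφm.mul (hBm1.comp hψm)
  -- the joint function used in Tonelli
  set F : (G × G) → G → ℝ≥0∞ :=
    fun p g => φ p * B.indicator 1 (ψ p) * K.indicator 1 (p.1⁻¹ * g) with hF
  have hFm : Measurable (Function.uncurry F) := by
    apply (hmul.comp measurable_fst).mul
    exact hKm1.comp (measurable_fst.fst.inv.mul measurable_snd)
  set F' : (G × G) → G → ℝ≥0∞ :=
    fun p g => φ p * B.indicator 1 (g * ψ p) * K.indicator 1 (p.1⁻¹) with hF'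
  have hF'm : Measurable (Function.uncurry F') := by
    apply Measurable.mul
    · exact (hφm.comp measurable_fst).mul
        (hBm1.comp (measurable_snd.mul (hψm.comp measurable_fst)))
    · exact hKm1.comp measurable_fst.fst.inv
  calc
    (∫⁻ p, φ p * B.indicator 1 (ψ p) ∂M) * lam K
        = ∫⁻ p, (φ p * B.indicator 1 (ψ p)) * lam K ∂M := (lintegral_mul_const _ hmul).symm
    _ = ∫⁻ p, ∫⁻ g, F p g ∂lam ∂M := by
        refine lintegral_congr fun p => ?_
        have hmeas : Measurable fun g : G => K.indicator (1 : G → ℝ≥0∞) (p.1⁻¹ * g) :=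
          hKm1.comp (measurable_const_mul p.1⁻¹)
        rw [hF]
        rw [lintegral_const_mul _ hmeas]
        congr 1
        rw [lintegral_mul_left_eq_self (fun g => K.indicator (1 : G → ℝ≥0∞) g) p.1⁻¹,
          lintegral_indicator_one hK]
    _ = ∫⁻ g, ∫⁻ p, F p g ∂M ∂lam := lintegral_lintegral_swap hFm.aemeasurable
    _ = ∫⁻ g, ∫⁻ p, F' p g ∂M ∂lam := by
        refine lintegral_congr fun g => ?_
        have hTm : Measurable (fun p : G × G => (g * p.1, g * p.2)) :=
          (measurable_const_mul g).comp measurable_fst |>.prodMk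
            ((measurable_const_mul g).comp measurable_snd)
        have hFg : Measurable fun p : G × G => F p g :=
          hFm.comp (measurable_id.prodMk measurable_const)
        conv_lhs => rw [← hM g]
        rw [lintegral_map hFg hTm]
        refine lintegral_congr fun p => ?_
        show φ (g * p.1, g * p.2) * B.indicator 1 (ψ (g * p.1, g * p.2))
            * K.indicator 1 ((g * p.1)⁻¹ * g)
          = φ p * B.indicator 1 (g * ψ p) * K.indicator 1 (p.1⁻¹)
        rw [hφinv g p, hψinv g p]
        congr 2
        rw [mul_inv_rev, mul_assoc, inv_mul_cancel, mul_one]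
    _ = ∫⁻ p, ∫⁻ g, F' p g ∂lam ∂M := (lintegral_lintegral_swap hF'm.aemeasurable).symm
    _ = ∫⁻ p, K.indicator 1 (p.1⁻¹) * φ p * Δ (ψ p)⁻¹ * lam B ∂M := by
        refine lintegral_congr fun p => ?_
        have hre : ∀ g : G, F' p g
            = (φ p * K.indicator 1 (p.1⁻¹)) * B.indicator 1 (g * ψ p) := by
          intro g; rw [hF']; ring
        simp only [hre]
        have h5 : ∫⁻ g, φ p * K.indicator 1 p.1⁻¹ * B.indicator 1 (g * ψ p) ∂lam
            = (φ p * K.indicator 1 p.1⁻¹) * ∫⁻ g, B.indicator (1 : G → ℝ≥0∞) (g * ψ p) ∂lam :=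
          lintegral_const_mul _ (hBm1.comp (measurable_mul_const (ψ p)))
        rw [h5, hΔ (ψ p) _ hBm1, lintegral_indicator_one hB]
        ring
    _ = (∫⁻ p, K.indicator 1 (p.1⁻¹) * φ p * Δ (ψ p)⁻¹ ∂M) * lam B :=
        lintegral_mul_const _
          (((hKm1.comp measurable_fst.inv).mul hφm).mul (hΔm.comp hψm.inv))

/-- Mass-transport principle on a group: for a lcsc group `G` acting on itself by
multiplication and a σ-finite jointly invariant measure `M` on `G × G`, for every
measurable `B ⊆ G` one has `∫ Δ̃(s,t) 1_B(s) dM(s,t) = ∫ 1_B(t) dM(s,t)`, where the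
weight is `Δ(g⁻¹) = Δ(s·t⁻¹)` for the unique `g = t·s⁻¹` with `g·s = t`. -/
theorem stmt_14 {G : Type*} [Group G] [TopologicalSpace G] [IsTopologicalGroup G]
    [LocallyCompactSpace G] [SecondCountableTopology G] [T2Space G]
    [MeasurableSpace G] [BorelSpace G]
    (lam : Measure G) [lam.IsHaarMeasure]
    (Δ : G → ℝ≥0∞) (hΔpos : ∀ g, Δ g ≠ 0 ∧ Δ g ≠ ⊤)
    (hΔ : ∀ (h : G) (f : G → ℝ≥0∞), Measurable f →
      ∫⁻ g, f (g * h) ∂lam = Δ h⁻¹ * ∫⁻ g, f g ∂lam)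
    (M : Measure (G × G)) [SigmaFinite M]
    (hM : ∀ g : G, Measure.map (fun p : G × G => (g * p.1, g * p.2)) M = M)
    (B : Set G) (hB : MeasurableSet B) :
    ∫⁻ p, Δ (p.1 * p.2⁻¹) * B.indicator 1 p.1 ∂M
      = ∫⁻ p, B.indicator (1 : G → ℝ≥0∞) p.2 ∂M := by
  obtain ⟨K, hKc, hKn⟩ := exists_compact_mem_nhds (1 : G)
  have hK : MeasurableSet K := hKc.measurableSet
  have hc0 : lam K ≠ 0 := (lam.measure_pos_of_mem_nhds hKn).ne'
  have hcT : lam K ≠ ⊤ := hKc.measure_lt_top.ne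
  have hKm1 : Measurable (K.indicator (1 : G → ℝ≥0∞)) := measurable_one.indicator hK
  -- measurability of Δ
  have hΔeq : ∀ x : G, Δ x = (∫⁻ g, K.indicator 1 (g * x⁻¹) ∂lam) * (lam K)⁻¹ := by
    intro x
    rw [hΔ x⁻¹ _ hKm1, inv_inv, lintegral_indicator_one hK, mul_assoc,
      ENNReal.mul_inv_cancel hc0 hcT, mul_one]
  have hΔm : Measurable Δ := by
    have h1 : Measurable fun x : G => (∫⁻ g, K.indicator 1 (g * x⁻¹) ∂lam) * (lam K)⁻¹ := by
      apply Measurable.mul_const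
      apply Measurable.lintegral_prod_right'
        (f := fun q : G × G => K.indicator (1 : G → ℝ≥0∞) (q.2 * q.1⁻¹))
      exact hKm1.comp (measurable_snd.mul measurable_fst.inv)
    have : Δ = fun x : G => (∫⁻ g, K.indicator 1 (g * x⁻¹) ∂lam) * (lam K)⁻¹ := funext hΔeq
    rw [this]; exact h1
  -- multiplicativity of Δ
  have hΔmul : ∀ a b : G, Δ (a * b) = Δ a * Δ b := by
    intro a b
    have h1 := hΔ (b⁻¹ * a⁻¹) _ hKm1
    rw [mul_inv_rev, inv_inv, inv_inv, lintegral_indicator_one hK] at h1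
    have h3 := hΔ a⁻¹ _ hKm1
    rw [inv_inv, lintegral_indicator_one hK] at h3
    have h2 := hΔ b⁻¹ (fun u => K.indicator 1 (u * a⁻¹)) (hKm1.comp (measurable_mul_const a⁻¹))
    rw [inv_inv, h3] at h2
    have heq : ∀ g : G, K.indicator (1 : G → ℝ≥0∞) (g * (b⁻¹ * a⁻¹))
        = K.indicator (1 : G → ℝ≥0∞) (g * b⁻¹ * a⁻¹) := by
      intro g; rw [mul_assoc]
    simp only [heq] at h1
    have hcc : Δ (a * b) * lam K = (Δ a * Δ b) * lam K := by
      rw [← h1, h2]; ring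
    exact (ENNReal.mul_left_inj hc0 hcT).mp hcc
  have hΔone : Δ (1 : G) = 1 := by
    have h := hΔmul 1 1
    rw [mul_one] at h
    have h0 := (hΔpos 1).1
    have hT := (hΔpos 1).2
    calc Δ (1 : G) = Δ 1 * Δ 1 * (Δ 1)⁻¹ := by
          rw [mul_assoc, ENNReal.mul_inv_cancel h0 hT, mul_one]
    _ = Δ 1 * (Δ 1)⁻¹ := by rw [← h]
    _ = 1 := ENNReal.mul_inv_cancel h0 hT
  have hΔinv : ∀ a : G, Δ a * Δ a⁻¹ = 1 := by
    intro a
    rw [← hΔmul, mul_inv_cancel, hΔone]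
  have hΔconj : ∀ g x : G, Δ (g * x * g⁻¹) = Δ x := by
    intro g x
    rw [hΔmul, hΔmul, mul_right_comm, hΔinv, one_mul]
  -- the two instances of the auxiliary identity
  have e1 := mtp_aux lam Δ hΔm hΔ M hM B hB K hK
      (fun p => Δ (p.1 * p.2⁻¹)) (hΔm.comp (measurable_fst.mul measurable_snd.inv))
      Prod.fst measurable_fst
      (fun g p => by
        show Δ ((g * p.1) * (g * p.2)⁻¹) = Δ (p.1 * p.2⁻¹)
        have : (g * p.1) * (g * p.2)⁻¹ = g * (p.1 * p.2⁻¹) * g⁻¹ := by group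
        rw [this, hΔconj])
      (fun g p => rfl)
  have e2 := mtp_aux lam Δ hΔm hΔ M hM B hB K hK
      (fun _ => 1) measurable_const
      Prod.snd measurable_snd
      (fun g p => rfl) (fun g p => rfl)
  -- identify the two right-hand sides
  have key : ∀ p : G × G, Δ (p.1 * p.2⁻¹) * Δ (p.1)⁻¹ = Δ (p.2)⁻¹ := by
    intro p
    rw [hΔmul p.1 p.2⁻¹, mul_right_comm, hΔinv, one_mul]
  have eR : (∫⁻ p, K.indicator 1 (p.1⁻¹) * Δ (p.1 * p.2⁻¹) * Δ ((Prod.fst : G × G → G) p)⁻¹ ∂M)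
      = ∫⁻ p, K.indicator 1 (p.1⁻¹) * (1 : ℝ≥0∞) * Δ ((Prod.snd : G × G → G) p)⁻¹ ∂M := by
    refine lintegral_congr fun p => ?_
    show K.indicator 1 (p.1⁻¹) * Δ (p.1 * p.2⁻¹) * Δ (p.1)⁻¹
        = K.indicator 1 (p.1⁻¹) * 1 * Δ (p.2)⁻¹
    rw [mul_assoc, key p, mul_one]
  have final : (∫⁻ p, Δ (p.1 * p.2⁻¹) * B.indicator 1 p.1 ∂M) * lam K
      = (∫⁻ p, B.indicator (1 : G → ℝ≥0∞) p.2 ∂M) * lam K := by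
    have e2' : (∫⁻ p, B.indicator (1 : G → ℝ≥0∞) p.2 ∂M) * lam K
        = (∫⁻ p, K.indicator 1 (p.1⁻¹) * (1 : ℝ≥0∞) * Δ ((Prod.snd : G × G → G) p)⁻¹ ∂M)
          * lam B := by
      have := e2
      simp only [one_mul] at this
      exact this
    rw [e1, eR, ← e2']
  exact (ENNReal.mul_left_inj hc0 hcT).mp final
end

section
/- Let (Ω, 𝒜, P) be a σ-finite measure space, ξ a uniformly σ-finite kernel from Ω to a Borel space S, ν a σ-finite measure on S, and Q a σ-finite kernel from S to Ω. Suppose ν ⊗ Q is σ-finite, Q_s(ξ = 0) = 0 for ν-a.e. s, and the symmetry condition ∫∫∫ f(ω,s,t) ξ(ω,dt) Q_s(dω) ν(ds) = ∫∫∫ f(ω,t,s) ξ(ω,dt) Q_s(dω) ν(ds) holds for all measurable f ≥ 0. Then there exists a σ-finite measure P on Ω such that ν ⊗ Q equals the Campbell measure C_ξ of ξ with respect to P, i.e., ∫∫ f(ω,s) Q_s(dω) ν(ds) = ∫∫ f(ω,s) ξ(ω,ds) P(dω) for all measurable f ≥ 0. -/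
/-!
Take a density of product form `g ω s = ∑ᵢ 1_{Bᵢ}(s) uᵢ(ω)` with `∫ g(ω, t) ξ(ω, dt) = 1`
whenever `ξ ω ≠ 0`, and let `P` be the measure with density `g` with respect to `ν ⊗ Q`.
Applying the symmetry condition to `g(ω, s) f(ω, t)` exchanges the roles of `f` and `g`:
`∫∫ f dξ dP = ∫∫ f(ω, s) (∫ g(ω, t) ξ(ω, dt)) Q_s(dω) ν(ds)`, and the inner integral is `1`
for `ν ⊗ Q`-a.e. `(s, ω)` because `Q_s(ξ = 0) = 0`. The identity for `f = h` shows that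
`ω ↦ ∫ h(ω, t) ξ(ω, dt)`, which vanishes only where `ξ ω = 0`, is `P`-integrable; since `P`
does not charge `{ξ = 0}`, `P` is σ-finite.

The product form of `g` is what allows `P` to be built from `ν` and `Q` alone: `Q` is only a
measurable family of measures, so `s ↦ ∫ F(ω, s) Q_s(dω)` need not be measurable for a jointly
measurable `F`.
-/

open MeasureTheory ENNReal

namespace MeasureTheory

lemma sigmaFinite_of_lintegral_lt_top {α : Type*} [MeasurableSpace α]
    {μ : Measure α} {f : α → ℝ≥0∞} (hf : AEMeasurable f μ) (hf_zero : ∀ᵐ x ∂μ, f x ≠ 0)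
    (hf_int : ∫⁻ x, f x ∂μ < ∞) : SigmaFinite μ := by
  have : IsFiniteMeasure (μ.withDensity f) := isFiniteMeasure_withDensity hf_int.ne
  rw [← withDensity_inv_same₀ hf hf_zero (ae_lt_top' hf hf_int.ne |>.mono fun _ => ne_of_lt)]
  exact SigmaFinite.withDensity_of_ne_top <|
    (withDensity_absolutelyContinuous μ f).ae_le (hf_zero.mono fun _ => inv_ne_top.2)

lemma lintegral_ne_zero_of_pos {α : Type*} [MeasurableSpace α]
    {μ : Measure α} [NeZero μ] {f : α → ℝ≥0∞} (hf : Measurable f) (hpos : ∀ x, 0 < f x) :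
    ∫⁻ x, f x ∂μ ≠ 0 := fun h =>
  have ⟨x, hx⟩ := ((lintegral_eq_zero_iff hf).1 h).exists
  (hpos x).ne' hx

lemma lintegral_tsum_indicator_one_mul {β : Type*} [MeasurableSpace β] (μ : Measure β)
    {B : ℕ → Set β} (hB : ∀ i, MeasurableSet (B i)) (c : ℕ → ℝ≥0∞) :
    ∫⁻ t, ∑' i, (B i).indicator 1 t * c i ∂μ = ∑' i, c i * μ (B i) := by
  rw [lintegral_tsum fun i => ((measurable_one.indicator (hB i)).mul_const _).aemeasurable]
  refine tsum_congr fun i => ?_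
  rw [lintegral_mul_const _ (measurable_one.indicator (hB i)), lintegral_indicator_one (hB i),
    mul_comm]

end MeasureTheory

namespace ProbabilityTheory.Kernel

lemma isSFiniteKernel_of_isFiniteMeasure {α β : Type*}
    [MeasurableSpace α] [MeasurableSpace β] (κ : Kernel α β) [∀ a, IsFiniteMeasure (κ a)] :
    IsSFiniteKernel κ := by
  let level : ℕ → Set α := fun n => {a | ⌊(κ a Set.univ).toReal⌋₊ = n}
  have hlevel (n : ℕ) : MeasurableSet (level n) :=
    (κ.measurable_coe .univ).ennreal_toReal.nat_floor (measurableSet_singleton n)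
  have hfin (n : ℕ) : IsFiniteKernel (Kernel.piecewise (hlevel n) κ 0) := by
    refine ⟨⟨n + 1, by simp, fun a => ?_⟩⟩
    rw [Kernel.piecewise_apply]
    split_ifs with ha
    · rw [← ofReal_toReal (measure_ne_top (κ a) _), ← ofReal_natCast, ← ofReal_one,
        ← ofReal_add (by positivity) zero_le_one]
      exact ofReal_le_ofReal (ha ▸ Nat.lt_floor_add_one _).le
    · simp
  have hsum : Kernel.sum (fun n => Kernel.piecewise (hlevel n) κ 0) = κ := by
    ext a s hs
    simp only [Kernel.sum_apply, Measure.sum_apply _ hs, Kernel.piecewise_apply]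
    simp [level, apply_ite (fun μ : Measure β => μ s)]
  rw [← hsum]
  infer_instance

lemma isSFiniteKernel_of_partition {α β : Type*}
    [MeasurableSpace α] [MeasurableSpace β] (κ : Kernel α β) {B : ℕ → Set β}
    (hB : ∀ i, MeasurableSet (B i)) (hdisj : Pairwise (Function.onFun Disjoint B))
    (hcover : ⋃ i, B i = Set.univ) (hfin : ∀ a i, κ a (B i) < ∞) :
    IsSFiniteKernel κ := by
  have hsum : Kernel.sum (fun i => κ.restrict (hB i)) = κ := by
    ext1 a
    simp only [Kernel.sum_apply, Kernel.restrict_apply]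
    rw [← Measure.restrict_iUnion hdisj hB, hcover, Measure.restrict_univ]
  have (i : ℕ) : IsSFiniteKernel (κ.restrict (hB i)) :=
    have (a : α) : IsFiniteMeasure (κ.restrict (hB i) a) := by
      rw [Kernel.restrict_apply]; exact isFiniteMeasure_restrict.2 (hfin a i).ne
    (κ.restrict (hB i)).isSFiniteKernel_of_isFiniteMeasure
  rw [← hsum]
  infer_instance

end ProbabilityTheory.Kernel

lemma measurable_lintegral_of_partition {Ω S : Type*} [MeasurableSpace Ω] [MeasurableSpace S]
    {ξ : Ω → Measure S} (hξ : ∀ A, MeasurableSet A → Measurable fun ω => ξ ω A)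
    {B : ℕ → Set S} (hB : ∀ i, MeasurableSet (B i)) (hdisj : Pairwise (Function.onFun Disjoint B))
    (hcover : ⋃ i, B i = Set.univ) (hfin : ∀ ω i, ξ ω (B i) < ∞)
    {f : Ω → S → ℝ≥0∞} (hf : Measurable (Function.uncurry f)) :
    Measurable fun ω => ∫⁻ t, f ω t ∂ξ ω :=
  let κ : ProbabilityTheory.Kernel Ω S := ⟨ξ, Measure.measurable_of_measurable_coe ξ hξ⟩
  have := κ.isSFiniteKernel_of_partition hB hdisj hcover hfin
  hf.lintegral_kernel_prod_right (κ := κ)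

lemma measurableSet_setOf_eq_zero {Ω S : Type*} [MeasurableSpace Ω] [MeasurableSpace S]
    {ξ : Ω → Measure S} (hξ : ∀ A, MeasurableSet A → Measurable fun ω => ξ ω A) :
    MeasurableSet {ω | ξ ω = 0} := by
  simp_rw [← Measure.measure_univ_eq_zero]
  exact hξ _ .univ (measurableSet_singleton 0)

lemma exists_tsum_mul_measure_eq_one {Ω S : Type*} [MeasurableSpace Ω] [MeasurableSpace S]
    {ξ : Ω → Measure S} (hξ : ∀ A, MeasurableSet A → Measurable fun ω => ξ ω A)
    {B : ℕ → Set S} (hB : ∀ i, MeasurableSet (B i)) (hcover : ⋃ i, B i = Set.univ)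
    (hfin : ∀ ω i, ξ ω (B i) < ∞) :
    ∃ u : ℕ → Ω → ℝ≥0∞, (∀ i, Measurable (u i)) ∧
      ∀ ω, ξ ω ≠ 0 → ∑' i, u i ω * ξ ω (B i) = 1 := by
  let c : Ω → ℝ≥0∞ := fun ω => ∑' i, 2⁻¹ ^ i * (ξ ω (B i))⁻¹ * ξ ω (B i)
  have hc : Measurable c := Measurable.tsum fun i => by have := hξ _ (hB i); fun_prop
  refine ⟨fun i ω => 2⁻¹ ^ i * (ξ ω (B i))⁻¹ * (c ω)⁻¹,
    fun i => by have := hξ _ (hB i); fun_prop, fun ω hω => ?_⟩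
  have hc_top : c ω ≠ ∞ := by
    refine ne_top_of_le_ne_top (b := ∑' i : ℕ, (2⁻¹ : ℝ≥0∞) ^ i) ?_
      (ENNReal.tsum_le_tsum fun i => ?_)
    · simp [ENNReal.tsum_geometric, one_sub_inv_two]
    · simpa [mul_assoc] using
        mul_le_mul_right (ENNReal.inv_mul_le_one (ξ ω (B i))) ((2⁻¹ : ℝ≥0∞) ^ i)
  have hc_zero : c ω ≠ 0 := by
    obtain ⟨i, hi⟩ : ∃ i, ξ ω (B i) ≠ 0 := by
      by_contra! h
      exact hω (Measure.measure_univ_eq_zero.1 (hcover ▸ measure_iUnion_null h))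
    refine ENNReal.summable.tsum_ne_zero_iff.2 ⟨i, ?_⟩
    simp [hi, (hfin ω i).ne]
  calc ∑' i, 2⁻¹ ^ i * (ξ ω (B i))⁻¹ * (c ω)⁻¹ * ξ ω (B i)
      = (c ω)⁻¹ * c ω := by rw [← ENNReal.tsum_mul_left]; congr 1; ext i; ring
    _ = 1 := ENNReal.inv_mul_cancel hc_zero hc_top

lemma exists_measure_lintegral_eq_lintegral_tsum_mul {Ω S : Type*} [MeasurableSpace Ω]
    [MeasurableSpace S] (ν : Measure S) {Q : S → Measure Ω} (hQ : Measurable Q)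
    {v : ℕ → S → ℝ≥0∞} {u : ℕ → Ω → ℝ≥0∞} (hv : ∀ i, Measurable (v i))
    (hu : ∀ i, Measurable (u i)) :
    ∃ P : Measure Ω, ∀ Φ : Ω → ℝ≥0∞, Measurable Φ →
      ∫⁻ ω, Φ ω ∂P = ∫⁻ s, ∫⁻ ω, (∑' i, v i s * u i ω) * Φ ω ∂Q s ∂ν := by
  refine ⟨Measure.sum fun i => ((ν.withDensity (v i)).bind Q).withDensity (u i),
    fun Φ hΦ => ?_⟩
  have huΦ (i : ℕ) : Measurable fun ω => u i ω * Φ ω := (hu i).mul hΦ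
  have hQΦ (i : ℕ) : Measurable fun s => ∫⁻ ω, u i ω * Φ ω ∂Q s :=
    (Measure.measurable_lintegral (huΦ i)).comp hQ
  calc ∫⁻ ω, Φ ω ∂(Measure.sum fun i => ((ν.withDensity (v i)).bind Q).withDensity (u i))
      = ∑' i, ∫⁻ s, v i s * ∫⁻ ω, u i ω * Φ ω ∂Q s ∂ν := by
        rw [lintegral_sum_measure]
        refine tsum_congr fun i => ?_
        simp only [lintegral_withDensity_eq_lintegral_mul _ (hu i) hΦ, Pi.mul_apply]
        rw [Measure.lintegral_bind hQ.aemeasurable (huΦ i).aemeasurable,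
          lintegral_withDensity_eq_lintegral_mul _ (hv i) (hQΦ i)]
        rfl
    _ = ∫⁻ s, ∑' i, ∫⁻ ω, v i s * (u i ω * Φ ω) ∂Q s ∂ν := by
        rw [← lintegral_tsum fun i => ((hv i).fun_mul (hQΦ i)).aemeasurable]
        exact lintegral_congr fun s => tsum_congr fun i => (lintegral_const_mul _ (huΦ i)).symm
    _ = ∫⁻ s, ∫⁻ ω, (∑' i, v i s * u i ω) * Φ ω ∂Q s ∂ν := by
        refine lintegral_congr fun s => ?_
        rw [← lintegral_tsum fun i => (measurable_const.fun_mul (huΦ i)).aemeasurable]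
        simp only [← mul_assoc, ENNReal.tsum_mul_right]

lemma measure_eq_zero_of_forall_lintegral_eq {Ω S : Type*} [MeasurableSpace Ω]
    [MeasurableSpace S] {P : Measure Ω} {ν : Measure S} {Q : S → Measure Ω}
    {g : Ω → S → ℝ≥0∞}
    (hP : ∀ Φ : Ω → ℝ≥0∞, Measurable Φ →
      ∫⁻ ω, Φ ω ∂P = ∫⁻ s, ∫⁻ ω, g ω s * Φ ω ∂Q s ∂ν)
    {Z : Set Ω} (hZ : MeasurableSet Z) (hQZ : ∀ᵐ s ∂ν, Q s Z = 0) : P Z = 0 := by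
  rw [← lintegral_indicator_one hZ, hP _ (measurable_one.indicator hZ)]
  refine (lintegral_congr_ae (hQZ.mono fun s hs => ?_)).trans lintegral_zero
  refine (lintegral_congr_ae ((measure_eq_zero_iff_ae_notMem.1 hs).mono fun ω hω => ?_)).trans
    lintegral_zero
  simp [Set.indicator_of_notMem hω]

lemma lintegral_mul_lintegral_comm_of_symm {Ω S : Type*} [MeasurableSpace Ω]
    [MeasurableSpace S] {ξ : Ω → Measure S} {ν : Measure S} {Q : S → Measure Ω}
    (hsym : ∀ F : Ω → S → S → ℝ≥0∞,
      Measurable (fun p : Ω × S × S => F p.1 p.2.1 p.2.2) →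
      ∫⁻ s, ∫⁻ ω, ∫⁻ t, F ω s t ∂(ξ ω) ∂(Q s) ∂ν
        = ∫⁻ s, ∫⁻ ω, ∫⁻ t, F ω t s ∂(ξ ω) ∂(Q s) ∂ν)
    {f g : Ω → S → ℝ≥0∞} (hf : Measurable (Function.uncurry f))
    (hg : Measurable (Function.uncurry g)) :
    ∫⁻ s, ∫⁻ ω, g ω s * ∫⁻ t, f ω t ∂ξ ω ∂Q s ∂ν
      = ∫⁻ s, ∫⁻ ω, f ω s * ∫⁻ t, g ω t ∂ξ ω ∂Q s ∂ν := by
  have hF : Measurable fun p : Ω × S × S => g p.1 p.2.1 * f p.1 p.2.2 :=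
    (hg.comp (measurable_fst.prodMk (measurable_fst.comp measurable_snd))).mul
      (hf.comp (measurable_fst.prodMk (measurable_snd.comp measurable_snd)))
  have hslice {h : Ω → S → ℝ≥0∞} (hh : Measurable (Function.uncurry h)) (ω : Ω) :
      Measurable (h ω) :=
    hh.comp measurable_prodMk_left
  calc ∫⁻ s, ∫⁻ ω, g ω s * ∫⁻ t, f ω t ∂ξ ω ∂Q s ∂ν
      = ∫⁻ s, ∫⁻ ω, ∫⁻ t, g ω s * f ω t ∂ξ ω ∂Q s ∂ν :=
        lintegral_congr fun s => lintegral_congr fun ω =>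
          (lintegral_const_mul _ (hslice hf ω)).symm
    _ = ∫⁻ s, ∫⁻ ω, ∫⁻ t, g ω t * f ω s ∂ξ ω ∂Q s ∂ν := hsym _ hF
    _ = ∫⁻ s, ∫⁻ ω, f ω s * ∫⁻ t, g ω t ∂ξ ω ∂Q s ∂ν :=
        lintegral_congr fun s => lintegral_congr fun ω => by
          rw [lintegral_mul_const _ (hslice hg ω), mul_comm]

lemma lintegral_lintegral_eq_of_symm {Ω S : Type*} [MeasurableSpace Ω] [MeasurableSpace S]
    {ξ : Ω → Measure S} {ν : Measure S} {Q : S → Measure Ω}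
    (hsym : ∀ F : Ω → S → S → ℝ≥0∞,
      Measurable (fun p : Ω × S × S => F p.1 p.2.1 p.2.2) →
      ∫⁻ s, ∫⁻ ω, ∫⁻ t, F ω s t ∂(ξ ω) ∂(Q s) ∂ν
        = ∫⁻ s, ∫⁻ ω, ∫⁻ t, F ω t s ∂(ξ ω) ∂(Q s) ∂ν)
    {P : Measure Ω} {g : Ω → S → ℝ≥0∞}
    (hP : ∀ Φ : Ω → ℝ≥0∞, Measurable Φ →
      ∫⁻ ω, Φ ω ∂P = ∫⁻ s, ∫⁻ ω, g ω s * Φ ω ∂Q s ∂ν)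
    (hg : Measurable (Function.uncurry g))
    (hg_one : ∀ᵐ s ∂ν, ∀ᵐ ω ∂Q s, ∫⁻ t, g ω t ∂ξ ω = 1)
    {f : Ω → S → ℝ≥0∞} (hf : Measurable (Function.uncurry f))
    (hξf : Measurable fun ω => ∫⁻ t, f ω t ∂ξ ω) :
    ∫⁻ ω, ∫⁻ t, f ω t ∂ξ ω ∂P = ∫⁻ s, ∫⁻ ω, f ω s ∂Q s ∂ν :=
  calc ∫⁻ ω, ∫⁻ t, f ω t ∂ξ ω ∂P = ∫⁻ s, ∫⁻ ω, g ω s * ∫⁻ t, f ω t ∂ξ ω ∂Q s ∂ν := hP _ hξf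
    _ = ∫⁻ s, ∫⁻ ω, f ω s * ∫⁻ t, g ω t ∂ξ ω ∂Q s ∂ν :=
        lintegral_mul_lintegral_comm_of_symm hsym hf hg
    _ = ∫⁻ s, ∫⁻ ω, f ω s ∂Q s ∂ν :=
        lintegral_congr_ae <| hg_one.mono fun s hs => lintegral_congr_ae <|
          hs.mono fun ω hω => by simp only [hω, mul_one]

theorem stmt_19_general {Ω S : Type*} [MeasurableSpace Ω]
    [MeasurableSpace S]
    (ξ : Ω → Measure S)
    (hξmeas : ∀ B : Set S, MeasurableSet B → Measurable fun ω => ξ ω B)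
    -- uniform σ-finiteness of ξ
    (hξσ : ∃ B : ℕ → Set S, (∀ i, MeasurableSet (B i)) ∧
      Pairwise (Function.onFun Disjoint B) ∧ (⋃ i, B i) = Set.univ ∧
      ∀ (ω : Ω) (i : ℕ), ξ ω (B i) < ⊤)
    (ν : Measure S)
    (Q : S → Measure Ω)
    (hQmeas : ∀ A : Set Ω, MeasurableSet A → Measurable fun s => Q s A)
    -- σ-finiteness of ν ⊗ Q
    (hνQσ : ∃ h : Ω × S → ℝ≥0∞, Measurable h ∧ (∀ p, 0 < h p) ∧
      ∫⁻ s, ∫⁻ ω, h (ω, s) ∂(Q s) ∂ν < ⊤)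
    (hQ0 : ∀ᵐ s ∂ν, Q s {ω | ξ ω = 0} = 0)
    -- symmetry condition
    (hsym : ∀ f : Ω → S → S → ℝ≥0∞,
      Measurable (fun p : Ω × S × S => f p.1 p.2.1 p.2.2) →
      ∫⁻ s, ∫⁻ ω, ∫⁻ t, f ω s t ∂(ξ ω) ∂(Q s) ∂ν
        = ∫⁻ s, ∫⁻ ω, ∫⁻ t, f ω t s ∂(ξ ω) ∂(Q s) ∂ν) :
    ∃ P : Measure Ω, SigmaFinite P ∧
      ∀ f : Ω → S → ℝ≥0∞, Measurable (fun p : Ω × S => f p.1 p.2) →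
        ∫⁻ s, ∫⁻ ω, f ω s ∂(Q s) ∂ν = ∫⁻ ω, ∫⁻ s, f ω s ∂(ξ ω) ∂P := by
  obtain ⟨B, hB, hdisj, hcover, hfin⟩ := hξσ
  obtain ⟨h, hh, hh_pos, hh_int⟩ := hνQσ
  have hξ_int {f : Ω → S → ℝ≥0∞} (hf : Measurable (Function.uncurry f)) :
      Measurable fun ω => ∫⁻ t, f ω t ∂ξ ω :=
    measurable_lintegral_of_partition hξmeas hB hdisj hcover hfin hf
  obtain ⟨u, hu, hu_one⟩ := exists_tsum_mul_measure_eq_one hξmeas hB hcover hfin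
  let g : Ω → S → ℝ≥0∞ := fun ω s => ∑' i, (B i).indicator 1 s * u i ω
  have hg : Measurable (Function.uncurry g) := Measurable.tsum fun i =>
    ((measurable_one.indicator (hB i)).comp measurable_snd).mul ((hu i).comp measurable_fst)
  have hg_one : ∀ᵐ s ∂ν, ∀ᵐ ω ∂Q s, ∫⁻ t, g ω t ∂ξ ω = 1 :=
    hQ0.mono fun s hs => (measure_eq_zero_iff_ae_notMem.1 hs).mono fun ω hω => by
      rw [lintegral_tsum_indicator_one_mul _ hB, hu_one ω hω]
  obtain ⟨P, hP⟩ := exists_measure_lintegral_eq_lintegral_tsum_mul ν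
    (Measure.measurable_of_measurable_coe Q hQmeas) (fun i => measurable_one.indicator (hB i)) hu
  have campbell {f : Ω → S → ℝ≥0∞} (hf : Measurable (Function.uncurry f)) :
      ∫⁻ ω, ∫⁻ t, f ω t ∂ξ ω ∂P = ∫⁻ s, ∫⁻ ω, f ω s ∂Q s ∂ν :=
    lintegral_lintegral_eq_of_symm hsym hP hg hg_one hf (hξ_int hf)
  have hP_ae : ∀ᵐ ω ∂P, ξ ω ≠ 0 := measure_eq_zero_iff_ae_notMem.1 <|
    measure_eq_zero_of_forall_lintegral_eq hP (measurableSet_setOf_eq_zero hξmeas) hQ0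
  refine ⟨P, sigmaFinite_of_lintegral_lt_top (hξ_int (f := fun ω t => h (ω, t)) hh).aemeasurable
    ?_ ((campbell (f := fun ω t => h (ω, t)) hh).trans_lt hh_int), fun f hf => (campbell hf).symm⟩
  filter_upwards [hP_ae] with ω hω
  have : NeZero (ξ ω) := ⟨hω⟩
  exact lintegral_ne_zero_of_pos (hh.comp measurable_prodMk_left) fun t => hh_pos (ω, t)

/-- Characterization of Palm pairs (sufficiency, no invariance): if `ν ⊗ Q` is σ-finite,
`Q_s(ξ = 0) = 0` for `ν`-a.e. `s`, and the symmetry condition holds, then `(ν, Q)` is a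
Palm pair of `ξ` with respect to some σ-finite measure `P` on `Ω`, i.e., `ν ⊗ Q` is the
Campbell measure of `ξ` with respect to `P`. -/
theorem stmt_19 {Ω S : Type*} [MeasurableSpace Ω]
    [MeasurableSpace S] [StandardBorelSpace S]
    (ξ : Ω → Measure S)
    (hξmeas : ∀ B : Set S, MeasurableSet B → Measurable fun ω => ξ ω B)
    -- uniform σ-finiteness of ξ
    (hξσ : ∃ B : ℕ → Set S, (∀ i, MeasurableSet (B i)) ∧
      Pairwise (Function.onFun Disjoint B) ∧ (⋃ i, B i) = Set.univ ∧
      ∀ (ω : Ω) (i : ℕ), ξ ω (B i) < ⊤)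
    (ν : Measure S) [SigmaFinite ν]
    (Q : S → Measure Ω)
    (hQmeas : ∀ A : Set Ω, MeasurableSet A → Measurable fun s => Q s A)
    -- σ-finiteness of ν ⊗ Q
    (hνQσ : ∃ h : Ω × S → ℝ≥0∞, Measurable h ∧ (∀ p, 0 < h p) ∧
      ∫⁻ s, ∫⁻ ω, h (ω, s) ∂(Q s) ∂ν < ⊤)
    (hQ0 : ∀ᵐ s ∂ν, Q s {ω | ξ ω = 0} = 0)
    -- symmetry condition
    (hsym : ∀ f : Ω → S → S → ℝ≥0∞,
      Measurable (fun p : Ω × S × S => f p.1 p.2.1 p.2.2) →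
      ∫⁻ s, ∫⁻ ω, ∫⁻ t, f ω s t ∂(ξ ω) ∂(Q s) ∂ν
        = ∫⁻ s, ∫⁻ ω, ∫⁻ t, f ω t s ∂(ξ ω) ∂(Q s) ∂ν) :
    ∃ P : Measure Ω, SigmaFinite P ∧
      ∀ f : Ω → S → ℝ≥0∞, Measurable (fun p : Ω × S => f p.1 p.2) →
        ∫⁻ s, ∫⁻ ω, f ω s ∂(Q s) ∂ν = ∫⁻ ω, ∫⁻ s, f ω s ∂(ξ ω) ∂P :=
  stmt_19_general ξ hξmeas hξσ ν Q hQmeas hνQσ hQ0 hsym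
end
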